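/- arXiv:2206.13486 — 2 statements merged into one kernel-verified Lean document; each statement's English description precedes it below -/
import Mathlib

section
/- Let m, d, n, c be nonnegative integers, let f : ℝ^m → ℝ^d be an affine map, let ρ be an n-simplex in ℝ^m with vertex set A, and let σ be a c-simplex in ℝ^d with vertex set B. Assume that the set f(A) of images of the vertices of ρ is disjoint from B and that f(A) ∪ B is in strong general position in ℝ^d. If ρ ∩ f⁻¹(σ) is nonempty, then the affine span of ρ ∩ f⁻¹(σ) has dimension at most n + c − d. (This dimension bound underlies the three intersection-dimension computations in the proof of Conjecture 2.2 in Section 3.) -/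
/-- `s ⊆ ℝⁿ` is the geometric `c`-simplex with vertex set `V`:
`V` consists of `c + 1` affinely independent points and `s` is their convex hull. -/
def IsSimplexWithVertices {n : ℕ} (c : ℕ) (V : Finset (Fin n → ℝ))
    (s : Set (Fin n → ℝ)) : Prop :=
  V.card = c + 1 ∧
  AffineIndependent ℝ ((↑) : V → (Fin n → ℝ)) ∧
  s = convexHull ℝ (V : Set (Fin n → ℝ))

/-- `s` is a `c`-simplex in `ℝⁿ`. -/
def IsSimplex {n : ℕ} (c : ℕ) (s : Set (Fin n → ℝ)) : Prop :=
  ∃ V, IsSimplexWithVertices c V s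

/-- `t` is a facet (i.e. a `(c-1)`-dimensional face) of the `c`-simplex `s`. -/
def IsFacetOf {n : ℕ} (c : ℕ) (t s : Set (Fin n → ℝ)) : Prop :=
  ∃ V W : Finset (Fin n → ℝ), IsSimplexWithVertices c V s ∧ W ⊆ V ∧ W.card = c ∧
    t = convexHull ℝ (W : Set (Fin n → ℝ))

/-- The boundary of a `c`-simplex: the union of its facets. -/
def simplexBoundary {n : ℕ} (c : ℕ) (s : Set (Fin n → ℝ)) : Set (Fin n → ℝ) :=
  ⋃₀ {t | IsFacetOf c t s}

/-- A finite set `P` of `c`-simplices in `ℝⁿ` is a (mod 2) cycle if every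
`(c-1)`-simplex is a facet of an even number of members of `P`. -/
def IsCycle {n : ℕ} (c : ℕ) (P : Finset (Set (Fin n → ℝ))) : Prop :=
  ∀ σ : Set (Fin n → ℝ), IsSimplex (c - 1) σ →
    Even {τ | τ ∈ P ∧ IsFacetOf c σ τ}.ncard

/-- `t` is a face of the simplex `s`: the convex hull of a nonempty subset of its vertices. -/
def IsFaceOfSimplex {n : ℕ} (t s : Set (Fin n → ℝ)) : Prop :=
  ∃ (c : ℕ) (V W : Finset (Fin n → ℝ)), IsSimplexWithVertices c V s ∧ W ⊆ V ∧ W.Nonempty ∧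
    t = convexHull ℝ (W : Set (Fin n → ℝ))

/-- A finite set of simplices is simplicial if any two distinct members intersect,
whenever at all, in a common face. -/
def IsSimplicial {n : ℕ} (Q : Finset (Set (Fin n → ℝ))) : Prop :=
  ∀ σ₁ ∈ Q, ∀ σ₂ ∈ Q, σ₁ ≠ σ₂ → (σ₁ ∩ σ₂).Nonempty →
    IsFaceOfSimplex (σ₁ ∩ σ₂) σ₁ ∧ IsFaceOfSimplex (σ₁ ∩ σ₂) σ₂

/-- `s` is a `c`-polytope in `ℝⁿ`: the convex hull of a finite set of points
whose affine span has dimension `c`. -/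
def IsPolytope {n : ℕ} (c : ℕ) (s : Set (Fin n → ℝ)) : Prop :=
  ∃ V : Finset (Fin n → ℝ), V.Nonempty ∧ s = convexHull ℝ (V : Set (Fin n → ℝ)) ∧
    Module.finrank ℝ (affineSpan ℝ (V : Set (Fin n → ℝ))).direction = c

/-- A set `V` of points of `ℝ^d` is in strong general position if for every finite
collection of pairwise disjoint subsets of `V`, the intersection of their affine spans
is either empty or has dimension at most `Σᵢ dim Aff(Vᵢ) - d(r-1)`. -/
def InStrongGeneralPosition {d : ℕ} (V : Set (Fin d → ℝ)) : Prop :=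
  ∀ (r : ℕ) (Vs : Fin r → Set (Fin d → ℝ)), (∀ i, Vs i ⊆ V) →
    Pairwise (Function.onFun Disjoint Vs) →
    (⨅ i, affineSpan ℝ (Vs i)) = ⊥ ∨
    (Module.finrank ℝ (⨅ i, affineSpan ℝ (Vs i)).direction : ℤ) ≤
      (∑ i, (Module.finrank ℝ (affineSpan ℝ (Vs i)).direction : ℤ)) - d * ((r : ℤ) - 1)

/-- `s` is a nondegenerate closed segment (1-simplex) in `ℝ^d`. -/
def IsSegment {d : ℕ} (s : Set (Fin d → ℝ)) : Prop :=
  ∃ a b : Fin d → ℝ, a ≠ b ∧ s = segment ℝ a b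

/-- `p` is an endpoint of the nondegenerate segment `s`. -/
def IsEndpointOf {d : ℕ} (p : Fin d → ℝ) (s : Set (Fin d → ℝ)) : Prop :=
  ∃ a b : Fin d → ℝ, a ≠ b ∧ s = segment ℝ a b ∧ (p = a ∨ p = b)

lemma finrank_map_add_inf_ker {V W : Type*} [AddCommGroup V] [Module ℝ V]
    [AddCommGroup W] [Module ℝ W] [FiniteDimensional ℝ V]
    (L : V →ₗ[ℝ] W) (U : Submodule ℝ V) :
    Module.finrank ℝ (U.map L) + Module.finrank ℝ (U ⊓ LinearMap.ker L : Submodule ℝ V)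
      = Module.finrank ℝ U := by
  have h := LinearMap.finrank_range_add_finrank_ker (L.domRestrict U)
  rw [LinearMap.range_domRestrict, LinearMap.ker_domRestrict] at h
  rw [← h, ← Submodule.finrank_map_subtype_eq U ((LinearMap.ker L).comap U.subtype),
    Submodule.map_comap_subtype, inf_comm]

/-- The dimension bound underlying the intersection computations in Section 3:
if `f : ℝ^m → ℝ^d` is affine, `ρ` is an `n`-simplex in `ℝ^m` with vertex set `A`,
`σ` is a `c`-simplex in `ℝ^d` with vertex set `B`, the set `f(A)` is disjoint from `B`
and `f(A) ∪ B` is in strong general position, then a nonempty `ρ ∩ f⁻¹(σ)` has affine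
span of dimension at most `n + c - d`. -/
theorem stmt4 {m d : ℕ} (n c : ℕ)
    (f : (Fin m → ℝ) →ᵃ[ℝ] (Fin d → ℝ))
    (ρ : Set (Fin m → ℝ)) (A : Finset (Fin m → ℝ))
    (hρ : IsSimplexWithVertices n A ρ)
    (σ : Set (Fin d → ℝ)) (B : Finset (Fin d → ℝ))
    (hσ : IsSimplexWithVertices c B σ)
    (hdisj : Disjoint (f '' (A : Set (Fin m → ℝ))) (B : Set (Fin d → ℝ)))
    (hsgp : InStrongGeneralPosition (f '' (A : Set (Fin m → ℝ)) ∪ (B : Set (Fin d → ℝ))))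
    (hne : (ρ ∩ f ⁻¹' σ).Nonempty) :
    (Module.finrank ℝ (affineSpan ℝ (ρ ∩ f ⁻¹' σ)).direction : ℤ)
      ≤ (n : ℤ) + (c : ℤ) - (d : ℤ) := by
  obtain ⟨hAcard, hAind, hρeq⟩ := hρ
  obtain ⟨hBcard, hBind, hσeq⟩ := hσ
  obtain ⟨x, hxρ, hxσ⟩ := hne
  set L := f.linear with hL
  set S := ρ ∩ f ⁻¹' σ with hS
  -- dimensions of the two spans
  have hdimA : Module.finrank ℝ (affineSpan ℝ (A : Set (Fin m → ℝ))).direction = n := by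
    rw [direction_affineSpan, ← Subtype.range_coe (s := (A : Set (Fin m → ℝ)))]
    exact hAind.finrank_vectorSpan (by simpa using hAcard)
  have hdimB : Module.finrank ℝ (affineSpan ℝ (B : Set (Fin d → ℝ))).direction = c := by
    rw [direction_affineSpan, ← Subtype.range_coe (s := (B : Set (Fin d → ℝ)))]
    exact hBind.finrank_vectorSpan (by simpa using hBcard)
  -- apply strong general position with the two sets f '' A and B
  let Vs : Fin 2 → Set (Fin d → ℝ) := ![f '' (A : Set (Fin m → ℝ)), (B : Set (Fin d → ℝ))]
  have hinf : (⨅ i, affineSpan ℝ (Vs i))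
      = affineSpan ℝ (f '' (A : Set (Fin m → ℝ))) ⊓ affineSpan ℝ (B : Set (Fin d → ℝ)) := by
    apply le_antisymm
    · exact le_inf (iInf_le _ 0) (iInf_le _ 1)
    · refine le_iInf fun i => ?_
      fin_cases i
      · exact inf_le_left
      · exact inf_le_right
  have hfx : f x ∈ affineSpan ℝ (f '' (A : Set (Fin m → ℝ)))
      ⊓ affineSpan ℝ (B : Set (Fin d → ℝ)) := by
    constructor
    · apply convexHull_subset_affineSpan
      rw [← AffineMap.image_convexHull, ← hρeq]
      exact ⟨x, hxρ, rfl⟩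
    · apply convexHull_subset_affineSpan
      rw [← hσeq]; exact hxσ
  have hsgp2 := hsgp 2 Vs (by
      intro i; fin_cases i
      · exact Set.subset_union_left
      · exact Set.subset_union_right)
    (by
      intro i j hij
      fin_cases i <;> fin_cases j <;> simp_all [Function.onFun, Vs] <;>
        first | exact hdisj | exact hdisj.symm)
  rw [hinf] at hsgp2
  have hsgp3 : (Module.finrank ℝ ((affineSpan ℝ (f '' (A : Set (Fin m → ℝ)))
        ⊓ affineSpan ℝ (B : Set (Fin d → ℝ))).direction) : ℤ)
      ≤ (Module.finrank ℝ (affineSpan ℝ (f '' (A : Set (Fin m → ℝ)))).direction : ℤ)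
        + (c : ℤ) - (d : ℤ) := by
    rcases hsgp2 with h | h
    · exfalso
      rw [h] at hfx
      exact AffineSubspace.notMem_bot ℝ _ (f x) hfx
    · rw [Fin.sum_univ_two, show Vs 0 = ⇑f '' (A : Set (Fin m → ℝ)) from rfl,
        show Vs 1 = (B : Set (Fin d → ℝ)) from rfl, hdimB] at h
      push_cast at h ⊢
      linarith
  -- the span of S maps into the intersection
  have hSA : affineSpan ℝ S ≤ affineSpan ℝ (A : Set (Fin m → ℝ)) := by
    apply affineSpan_le.mpr
    exact (Set.inter_subset_left).trans (hρeq ▸ convexHull_subset_affineSpan _)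
  have hmap : (affineSpan ℝ S).map f ≤ affineSpan ℝ (f '' (A : Set (Fin m → ℝ)))
      ⊓ affineSpan ℝ (B : Set (Fin d → ℝ)) := by
    rw [AffineSubspace.map_span]
    refine le_inf (affineSpan_le.mpr ?_) (affineSpan_le.mpr ?_)
    · intro y ⟨z, hz, hzy⟩
      have : z ∈ convexHull ℝ (A : Set (Fin m → ℝ)) := hρeq ▸ hz.1
      rw [← hzy]
      exact convexHull_subset_affineSpan _
        ((AffineMap.image_convexHull f _ ▸ Set.mem_image_of_mem f this))
    · intro y ⟨z, hz, hzy⟩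
      have : f z ∈ σ := hz.2
      rw [← hzy]
      exact convexHull_subset_affineSpan _ (hσeq ▸ this)
  set W := (affineSpan ℝ S).direction with hW
  have e1 : Module.finrank ℝ (W.map L) + Module.finrank ℝ (W ⊓ LinearMap.ker L : Submodule ℝ _)
      = Module.finrank ℝ W := finrank_map_add_inf_ker L W
  have i1 : Module.finrank ℝ (W.map L) ≤ Module.finrank ℝ ((affineSpan ℝ
      (f '' (A : Set (Fin m → ℝ))) ⊓ affineSpan ℝ (B : Set (Fin d → ℝ))).direction) := by
    apply Submodule.finrank_mono
    have := AffineSubspace.direction_le hmap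
    rwa [AffineSubspace.map_direction] at this
  have i2 : Module.finrank ℝ (W ⊓ LinearMap.ker L : Submodule ℝ _)
      ≤ Module.finrank ℝ ((affineSpan ℝ (A : Set (Fin m → ℝ))).direction
          ⊓ LinearMap.ker L : Submodule ℝ _) :=
    Submodule.finrank_mono (inf_le_inf_right _ (AffineSubspace.direction_le hSA))
  have e2 : Module.finrank ℝ ((affineSpan ℝ (A : Set (Fin m → ℝ))).direction.map L)
      + Module.finrank ℝ ((affineSpan ℝ (A : Set (Fin m → ℝ))).direction
          ⊓ LinearMap.ker L : Submodule ℝ _) = n := by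
    rw [finrank_map_add_inf_ker L, hdimA]
  have e3 : (affineSpan ℝ (A : Set (Fin m → ℝ))).direction.map L
      = (affineSpan ℝ (f '' (A : Set (Fin m → ℝ)))).direction := by
    rw [← AffineSubspace.map_span, AffineSubspace.map_direction]
  rw [e3] at e2
  omega
end

section
/- Let x, y, z, t be points in ℝ² such that the closed segments [x, y] and [z, t] intersect in exactly one point O, and O is not one of the endpoints x, y, z, t. Let Q be a finite set of nondegenerate closed segments in ℝ² such that any two distinct members of Q intersect either in the empty set or in a common endpoint, and such that ⋃Q = [x, y] ∪ [z, t]. Then O is an endpoint of some segment of Q. (This is the claim in the Remark after Conjecture 3.3: for any simplicial 1-chain C' whose union equals the union of the two crossing diameters, the crossing point O is a vertex of C'.) -/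
/-! If `O` were not a vertex, it would lie on a unique segment `q` of `Q`. Each of `[x, y]` and
`[z, t]` is covered by finitely many closed segments, so `q` also contains points just beyond `O`
in both directions `y - x` and `t - z`. By convexity `q` contains their midpoint, which lies on one
of the two crossing segments; this makes `y - x` and `t - z` parallel, and then the two segments
would overlap near `O` instead of meeting only there. -/

open Set Filter Topology

section Segments

variable {E : Type*} [AddCommGroup E] [Module ℝ E]

theorem exists_sub_eq_smul_of_mem_segment {x y p p' : E} (hp : p ∈ segment ℝ x y)
    (hp' : p' ∈ segment ℝ x y) : ∃ c : ℝ, p' - p = c • (y - x) := by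
  rw [segment_eq_image'] at hp hp'
  obtain ⟨θ, -, rfl⟩ := hp
  obtain ⟨θ', -, rfl⟩ := hp'
  exact ⟨θ' - θ, by module⟩

theorem exists_eq_smul_of_add_smul_add_smul_mem_segment {x y O w : E} {a b : ℝ} (hb : b ≠ 0)
    (hO : O ∈ segment ℝ x y) (h : O + a • (y - x) + b • w ∈ segment ℝ x y) :
    ∃ k : ℝ, w = k • (y - x) := by
  obtain ⟨c, hc⟩ := exists_sub_eq_smul_of_mem_segment hO h
  refine ⟨b⁻¹ * (c - a), ?_⟩
  rw [mul_smul, sub_smul, ← hc, eq_inv_smul_iff₀ hb]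
  abel

theorem eventually_add_smul_sub_mem_segment {x y O : E} (hO : O ∈ openSegment ℝ x y) :
    ∀ᶠ r in 𝓝 (0 : ℝ), O + r • (y - x) ∈ segment ℝ x y := by
  rw [openSegment_eq_image'] at hO
  obtain ⟨a, ⟨ha₀, ha₁⟩, rfl⟩ := hO
  have hIcc : ∀ᶠ r in 𝓝 (0 : ℝ), a + r ∈ Icc (0 : ℝ) 1 :=
    (continuous_const_add a).continuousAt.preimage_mem_nhds
      (Icc_mem_nhds (by simpa using ha₀) (by simpa using ha₁))
  filter_upwards [hIcc] with r hr
  rw [segment_eq_image']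
  exact ⟨a + r, hr, by module⟩

theorem segment_inter_ne_singleton_of_sub_eq_smul {x y z t O : E} (hxy : x ≠ y)
    (hOxy : O ∈ openSegment ℝ x y) (hOzt : O ∈ openSegment ℝ z t) {k : ℝ}
    (hk : y - x = k • (t - z)) : segment ℝ x y ∩ segment ℝ z t ≠ {O} := by
  intro hO
  have hzt : ∀ᶠ r in 𝓝 (0 : ℝ), O + (r * k) • (t - z) ∈ segment ℝ z t :=
    ((continuous_mul_const k).tendsto' 0 0 (zero_mul k)).eventually
      (eventually_add_smul_sub_mem_segment hOzt)
  obtain ⟨r, ⟨hr_xy, hr_zt⟩, hr⟩ :=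
    (((eventually_add_smul_sub_mem_segment hOxy).and hzt).filter_mono
      nhdsWithin_le_nhds |>.and (self_mem_nhdsWithin (s := {0}ᶜ))).exists
  rw [mul_smul, ← hk] at hr_zt
  have hrO : O + r • (y - x) = O := hO.subset ⟨hr_xy, hr_zt⟩
  rw [add_eq_left, smul_eq_zero] at hrO
  exact hrO.elim hr (sub_ne_zero.mpr hxy.symm)

theorem Convex.add_smul_sub_notMem_of_crossing {x y z t O : E} {q : Set E} (hq : Convex ℝ q)
    (hsub : q ⊆ segment ℝ x y ∪ segment ℝ z t) (hO : segment ℝ x y ∩ segment ℝ z t = {O})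
    (hOxy : O ∈ openSegment ℝ x y) (hOzt : O ∈ openSegment ℝ z t) (hxy : x ≠ y) (hzt : z ≠ t)
    {s s' : ℝ} (hs : 0 < s) (hs' : 0 < s') (h : O + s • (y - x) ∈ q) :
    O + s' • (t - z) ∉ q := by
  intro h'
  have hM : O + (2⁻¹ * s) • (y - x) + (2⁻¹ * s') • (t - z) ∈ q := by
    convert hq h h' (by norm_num : (0 : ℝ) ≤ 2⁻¹) (by norm_num : (0 : ℝ) ≤ 2⁻¹) (by norm_num)
      using 1
    module
  rcases hsub hM with hM | hM
  · obtain ⟨k, hk⟩ := exists_eq_smul_of_add_smul_add_smul_mem_segment (by positivity)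
      (openSegment_subset_segment _ _ _ hOxy) hM
    exact segment_inter_ne_singleton_of_sub_eq_smul hzt hOzt hOxy hk (inter_comm _ _ ▸ hO)
  · rw [add_right_comm] at hM
    obtain ⟨k, hk⟩ := exists_eq_smul_of_add_smul_add_smul_mem_segment (by positivity)
      (openSegment_subset_segment _ _ _ hOzt) hM
    exact segment_inter_ne_singleton_of_sub_eq_smul hxy hOxy hOzt hk hO

end Segments

theorem Filter.Tendsto.exists_mem_frequently_of_eventually_mem_sUnion {α X : Type*}
    [TopologicalSpace X] {l : Filter α} [l.NeBot] {f : α → X} {O : X} (hf : Tendsto f l (𝓝 O))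
    {S : Set (Set X)} (hSfin : S.Finite) (hS : ∀ q ∈ S, IsClosed q)
    (h : ∀ᶠ a in l, f a ∈ ⋃₀ S) : ∃ q ∈ S, O ∈ q ∧ ∃ᶠ a in l, f a ∈ q := by
  obtain ⟨q, hq, hfreq⟩ : ∃ q ∈ S, ∃ᶠ a in l, f a ∈ q := by
    by_contra! H
    obtain ⟨a, ⟨q, hq, hfa⟩, hnot⟩ := (h.and ((eventually_all_finite hSfin).mpr H)).exists
    exact hnot q hq hfa
  exact ⟨q, hq, (hS q hq).mem_of_frequently_of_tendsto hfreq hf, hfreq⟩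

section TopologicalVectorSpace

variable {E : Type*} [AddCommGroup E] [Module ℝ E] [TopologicalSpace E] [ContinuousAdd E]
  [ContinuousSMul ℝ E]

theorem isClosed_segment [T2Space E] (a b : E) : IsClosed (segment ℝ a b) := by
  rw [segment_eq_image']
  exact (isCompact_Icc.image (by fun_prop)).isClosed

theorem exists_mem_of_segment_subset_sUnion {Q : Finset (Set E)} (hQ : ∀ q ∈ Q, IsClosed q)
    {a b O : E} (hab : segment ℝ a b ⊆ ⋃₀ (Q : Set (Set E))) (hO : O ∈ openSegment ℝ a b) :
    ∃ q ∈ Q, O ∈ q ∧ ∃ s : ℝ, 0 < s ∧ O + s • (b - a) ∈ q := by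
  have hf : Tendsto (fun s : ℝ => O + s • (b - a)) (𝓝[>] 0) (𝓝 O) :=
    ((by fun_prop : Continuous fun s : ℝ => O + s • (b - a)).tendsto' 0 O (by simp)).mono_left
      nhdsWithin_le_nhds
  have hcover : ∀ᶠ s in 𝓝[>] (0 : ℝ), O + s • (b - a) ∈ ⋃₀ (Q : Set (Set E)) :=
    ((eventually_add_smul_sub_mem_segment hO).filter_mono nhdsWithin_le_nhds).mono
      fun _ hs => hab hs
  obtain ⟨q, hq, hOq, hfreq⟩ :=
    hf.exists_mem_frequently_of_eventually_mem_sUnion Q.finite_toSet hQ hcover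
  obtain ⟨s, hs, hs_pos⟩ := (hfreq.and_eventually self_mem_nhdsWithin).exists
  exact ⟨q, hq, hOq, s, hs_pos, hs⟩

end TopologicalVectorSpace

theorem eq_of_mem_of_not_isEndpointOf {d : ℕ} {q₁ q₂ : Set (Fin d → ℝ)} {O : Fin d → ℝ}
    (h : q₁ ≠ q₂ → q₁ ∩ q₂ = ∅ ∨ ∃ p, q₁ ∩ q₂ = {p} ∧ IsEndpointOf p q₁ ∧ IsEndpointOf p q₂)
    (h₁ : O ∈ q₁) (h₂ : O ∈ q₂) (hend : ¬IsEndpointOf O q₂) : q₁ = q₂ := by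
  by_contra hne
  rcases h hne with hempty | ⟨p, hp, -, hp₂⟩
  · exact (hempty ▸ ⟨h₁, h₂⟩ : O ∈ (∅ : Set _))
  · have hOp : O ∈ q₁ ∩ q₂ := ⟨h₁, h₂⟩
    rw [hp, mem_singleton_iff] at hOp
    exact hend (hOp ▸ hp₂)

/-- The claim in the Remark after Conjecture 3.3: if two segments in `ℝ²` cross at a
single interior point `O`, then any simplicial 1-chain whose union is the union of the
two segments must have `O` as a vertex (an endpoint of one of its segments). -/
theorem stmt6 (x y z t O : Fin 2 → ℝ)
    (hO : segment ℝ x y ∩ segment ℝ z t = {O})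
    (hOx : O ≠ x) (hOy : O ≠ y) (hOz : O ≠ z) (hOt : O ≠ t)
    (Q : Finset (Set (Fin 2 → ℝ)))
    (hQseg : ∀ q ∈ Q, IsSegment q)
    (hQint : ∀ q₁ ∈ Q, ∀ q₂ ∈ Q, q₁ ≠ q₂ →
      q₁ ∩ q₂ = ∅ ∨ ∃ p, q₁ ∩ q₂ = {p} ∧ IsEndpointOf p q₁ ∧ IsEndpointOf p q₂)
    (hQun : ⋃₀ (Q : Set (Set (Fin 2 → ℝ))) = segment ℝ x y ∪ segment ℝ z t) :
    ∃ q ∈ Q, IsEndpointOf O q := by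
  obtain ⟨hOxy, hOzt⟩ : O ∈ segment ℝ x y ∩ segment ℝ z t := hO ▸ rfl
  have hxy : x ≠ y := by rintro rfl; exact hOx (by simpa using hOxy)
  have hzt : z ≠ t := by rintro rfl; exact hOz (by simpa using hOzt)
  have hOxy' := mem_openSegment_of_ne_left_right hOx.symm hOy.symm hOxy
  have hOzt' := mem_openSegment_of_ne_left_right hOz.symm hOt.symm hOzt
  have hclosed : ∀ q ∈ Q, IsClosed q := fun q hq => by
    obtain ⟨a, b, -, rfl⟩ := hQseg q hq
    exact isClosed_segment a b
  by_contra! hend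
  obtain ⟨q, hq, hOq⟩ : O ∈ ⋃₀ (Q : Set (Set (Fin 2 → ℝ))) := hQun ▸ Or.inl hOxy
  obtain ⟨q₁, hq₁, hOq₁, s, hs, h₁⟩ :=
    exists_mem_of_segment_subset_sUnion hclosed (hQun ▸ subset_union_left) hOxy'
  obtain ⟨q₂, hq₂, hOq₂, s', hs', h₂⟩ :=
    exists_mem_of_segment_subset_sUnion hclosed (hQun ▸ subset_union_right) hOzt'
  obtain rfl := eq_of_mem_of_not_isEndpointOf (hQint q₁ hq₁ q hq) hOq₁ hOq (hend q hq)
  obtain rfl := eq_of_mem_of_not_isEndpointOf (hQint q₂ hq₂ q₁ hq₁) hOq₂ hOq₁ (hend q₁ hq₁)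
  have hsub : q₂ ⊆ segment ℝ x y ∪ segment ℝ z t := hQun ▸ subset_sUnion_of_mem hq₂
  obtain ⟨a, b, -, rfl⟩ := hQseg q₂ hq₂
  exact (convex_segment a b).add_smul_sub_notMem_of_crossing hsub hO hOxy' hOzt' hxy hzt hs hs'
    h₁ h₂
end
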